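/- Let C be a commutative ring with a nonzero proper ideal I, and let B be the C-subalgebra of U_n(C) consisting of upper triangular matrices whose (1,2)-entry lies in I. Then B is a proper subalgebra of U_n(C) and s_{2n-2} is not an identity for B. -/

import Mathlib

/-!
Take the staircase of matrix units `e₁₁, c e₁₂, e₂₂, e₂₃, …, e₍ₙ₋₁₎₍ₙ₋₁₎, e₍ₙ₋₁₎ₙ` with
`0 ≠ c ∈ I`; all of them lie in `B`. A product of matrix units is nonzero only if consecutive
factors chain (column of one = row of the next). A staircase step `e_ij` can only be followed
by a later step `e_jj` or `e_j(j+1)`, so a chaining order of the `2n - 2` steps is increasing,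
hence the identity. So exactly one monomial of `s_{2n-2}` survives, and the standard polynomial
evaluates to `c e₁ₙ ≠ 0`.
-/

open Matrix

/-- The standard polynomial `s_d` evaluated at `x : Fin d → R`. -/
noncomputable def stdPoly {R : Type*} [Ring R] (d : ℕ) (x : Fin d → R) : R :=
  ∑ σ : Equiv.Perm (Fin d), ((Equiv.Perm.sign σ : ℤˣ) : ℤ) • (List.ofFn fun i => x (σ i)).prod

section ListProdSingle

variable {R ι α : Type*} [Semiring R] [DecidableEq ι] [Fintype ι] (r s : α → ι) (c : α → R)

theorem Matrix.list_prod_map_single_eq_zero :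
    ∀ l : List α, ¬ l.IsChain (fun a b => s a = r b) →
      (l.map fun a => single (r a) (s a) (c a)).prod = 0
  | [] => fun h => absurd List.isChain_nil h
  | [a] => fun h => absurd (List.isChain_singleton a) h
  | a :: b :: t => fun h => by
    rw [List.isChain_cons_cons] at h
    by_cases hab : s a = r b
    · rw [List.map_cons, List.prod_cons,
        list_prod_map_single_eq_zero (b :: t) fun ht => h ⟨hab, ht⟩, mul_zero]
    · rw [List.map_cons, List.map_cons, List.prod_cons, List.prod_cons, ← mul_assoc,
        single_mul_single_of_ne (h := hab), zero_mul]

theorem Matrix.list_prod_map_single_of_isChain :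
    ∀ (l : List α) (hl : l ≠ []), l.IsChain (fun a b => s a = r b) →
      (l.map fun a => single (r a) (s a) (c a)).prod =
        single (r (l.head hl)) (s (l.getLast hl)) (l.map c).prod
  | [], hl, _ => absurd rfl hl
  | [a], _, _ => by simp
  | a :: b :: t, _, h => by
    rw [List.isChain_cons_cons] at h
    rw [List.map_cons, List.prod_cons,
      list_prod_map_single_of_isChain (b :: t) (List.cons_ne_nil b t) h.2, List.head_cons,
      List.head_cons, h.1, single_mul_single_same, List.getLast_cons (List.cons_ne_nil b t)]
    simp

end ListProdSingle

theorem Equiv.Perm.eq_one_of_isChain_ofFn_le {d : ℕ} (σ : Equiv.Perm (Fin d))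
    (h : (List.ofFn σ).IsChain (· ≤ ·)) : σ = 1 := by
  have hmono : Monotone σ :=
    monotone_iff_forall_lt.mpr (List.pairwise_ofFn.mp (List.isChain_iff_pairwise.mp h))
  exact Equiv.ext (congrFun (hmono.strictMono_of_injective σ.injective).eq_id)

section Staircase

variable {C : Type*} {n : ℕ}

def stairRow (n : ℕ) (m : Fin (2 * n - 2)) : Fin n := ⟨m / 2, by have := m.isLt; omega⟩

def stairCol (n : ℕ) (m : Fin (2 * n - 2)) : Fin n := ⟨(m + 1) / 2, by have := m.isLt; omega⟩

/-- The weighted staircase `c₀ e₀₀, c₁ e₀₁, c₂ e₁₁, c₃ e₁₂, …, c₂ₙ₋₃ e₍ₙ₋₂₎₍ₙ₋₁₎` of matrix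
units, indexed from `0`. -/
def staircase [Zero C] (n : ℕ) (c : Fin (2 * n - 2) → C) :
    Fin (2 * n - 2) → Matrix (Fin n) (Fin n) C :=
  fun m => single (stairRow n m) (stairCol n m) (c m)

theorem le_of_stairCol_eq_stairRow {a b : Fin (2 * n - 2)} (h : stairCol n a = stairRow n b) :
    a ≤ b := by
  have h' : ((a : ℕ) + 1) / 2 = b / 2 := congrArg Fin.val h
  rw [Fin.le_iff_val_le_val]
  omega

theorem staircase_blockTriangular [Zero C] (c : Fin (2 * n - 2) → C) (m : Fin (2 * n - 2)) :
    (staircase n c m).BlockTriangular id :=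
  blockTriangular_single (show (m : ℕ) / 2 ≤ ((m : ℕ) + 1) / 2 by omega) _

theorem staircase_apply_zero_one [Zero C] (hn : 2 ≤ n) (c : Fin (2 * n - 2) → C)
    (m : Fin (2 * n - 2)) :
    staircase n c m ⟨0, zero_lt_two.trans_le hn⟩ ⟨1, one_lt_two.trans_le hn⟩ =
      if m = ⟨1, by omega⟩ then c m else 0 := by
  simp only [staircase, single_apply, stairRow, stairCol, Fin.ext_iff]
  exact if_congr (by omega) rfl rfl

theorem stdPoly_staircase [CommRing C] (hn : 2 ≤ n) (c : Fin (2 * n - 2) → C) :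
    stdPoly (2 * n - 2) (staircase n c) =
      single ⟨0, zero_lt_two.trans_le hn⟩ ⟨n - 1, by omega⟩ (∏ m, c m) := by
  have hprod : ∀ σ : Equiv.Perm (Fin (2 * n - 2)),
      (List.ofFn fun i => staircase n c (σ i)) =
        (List.ofFn σ).map fun m => single (stairRow n m) (stairCol n m) (c m) :=
    fun σ => by rw [List.map_ofFn]; rfl
  unfold stdPoly
  rw [Finset.sum_eq_single 1 ?_ (by simp)]
  · have hne : List.ofFn (id : Fin (2 * n - 2) → Fin (2 * n - 2)) ≠ [] := by
      simp only [ne_eq, List.ofFn_eq_nil_iff]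
      omega
    have hchain : (List.ofFn (id : Fin (2 * n - 2) → Fin (2 * n - 2))).IsChain
        (fun a b => stairCol n a = stairRow n b) :=
      List.isChain_ofFn.mpr fun _ _ => Fin.ext rfl
    have hfirst : stairRow n ⟨0, by omega⟩ = ⟨0, zero_lt_two.trans_le hn⟩ :=
      Fin.ext (Nat.zero_div 2)
    have hlast : stairCol n ⟨2 * n - 2 - 1, by omega⟩ = ⟨n - 1, by omega⟩ :=
      Fin.ext (show (2 * n - 2 - 1 + 1) / 2 = n - 1 by omega)
    rw [Equiv.Perm.sign_one, Units.val_one, one_smul, hprod, Equiv.Perm.coe_one,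
      list_prod_map_single_of_isChain _ _ _ _ hne hchain, List.head_ofFn, List.getLast_ofFn,
      List.map_ofFn, List.prod_ofFn, Function.comp_id, id_eq, id_eq, hfirst, hlast]
  · intro σ _ hσ
    rw [hprod, list_prod_map_single_eq_zero, smul_zero]
    exact fun hchain =>
      hσ (σ.eq_one_of_isChain_ofFn_le (hchain.imp fun _ _ => le_of_stairCol_eq_stairRow))

end Staircase

/-- Over a commutative ring `C` with a nonzero proper ideal `I`, the subalgebra `B` of
upper triangular matrices whose `(1,2)` entry lies in `I` is a proper subalgebra of
`U_n(C)` for which `s_{2n-2}` is not an identity. -/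
theorem ideal_subalgebra_not_satisfying (C : Type*) [CommRing C] (n : ℕ) (hn : 2 ≤ n)
    (I : Ideal C) (hI0 : I ≠ ⊥) (hI1 : I ≠ ⊤) :
    ({M : Matrix (Fin n) (Fin n) C |
        (∀ i j : Fin n, j < i → M i j = 0) ∧ M ⟨0, by omega⟩ ⟨1, by omega⟩ ∈ I} ⊂
      {M : Matrix (Fin n) (Fin n) C | ∀ i j : Fin n, j < i → M i j = 0}) ∧
    ∃ x : Fin (2 * n - 2) → Matrix (Fin n) (Fin n) C,
      (∀ k, (∀ i j : Fin n, j < i → x k i j = 0) ∧ x k ⟨0, by omega⟩ ⟨1, by omega⟩ ∈ I) ∧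
      stdPoly (2 * n - 2) x ≠ 0 := by
  obtain ⟨c, hcI, hc0⟩ := (Submodule.ne_bot_iff I).mp hI0
  have hproper : single (⟨0, by omega⟩ : Fin n) ⟨1, by omega⟩ (1 : C) ∉
      {M : Matrix (Fin n) (Fin n) C |
        (∀ i j : Fin n, j < i → M i j = 0) ∧ M ⟨0, by omega⟩ ⟨1, by omega⟩ ∈ I} :=
    fun h => hI1 ((Ideal.eq_top_iff_one I).mpr (by simpa using h.2))
  refine ⟨(Set.ssubset_iff_of_subset fun M hM => hM.1).mpr
      ⟨_, blockTriangular_single (b := id) (by simp [Fin.le_iff_val_le_val]) 1, hproper⟩,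
    staircase n (Pi.mulSingle ⟨1, by omega⟩ c),
    fun k => ⟨staircase_blockTriangular _ k, ?_⟩, ?_⟩
  · rw [staircase_apply_zero_one hn]
    split_ifs with hk
    · simpa [hk] using hcI
    · exact I.zero_mem
  · rw [stdPoly_staircase hn, Fintype.prod_pi_mulSingle']
    exact fun h => hc0 (by simpa using congrFun₂ h ⟨0, by omega⟩ ⟨n - 1, by omega⟩)
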